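/- Let q > 0, s, r ∈ ℝ with s² − q r > 0. If (s − √(s² − qr))/q < k₁ < k₂ < (s + √(s² − qr))/q, then there exists λ > 0 such that the matrix [[q, s],[s, r]] − λ·[[1, (k₁+k₂)/2],[(k₁+k₂)/2, k₁k₂]] is negative definite. -/

import Mathlib

open Matrix

def NegDef (M : Matrix (Fin 2) (Fin 2) ℝ) : Prop :=
  ∀ v : Fin 2 → ℝ, v ≠ 0 → v ⬝ᵥ M.mulVec v < 0

noncomputable def sectorMat (k1 k2 : ℝ) : Matrix (Fin 2) (Fin 2) ℝ :=
  !![1, (k1 + k2) / 2; (k1 + k2) / 2, k1 * k2]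

/-! Write `f k` for `sectorMargin q s r k = 2 s k - q k² - r`. The witness
`λ = q + (f k₁ + f k₂) / (k₂ - k₁)²` makes the top-left entry `q - λ` of the difference negative
and its determinant equal to `f k₁ * f k₂ / (k₂ - k₁)²`. Both factors are positive because
`q * f k = (s² - q r) - (q k - s)²` and `k₁, k₂` lie strictly between the roots
`(s ± √(s² - q r)) / q` of `f`. -/

lemma negDef_of_neg_of_det_pos {a b c : ℝ} (ha : a < 0) (hdet : 0 < a * c - b ^ 2) :
    NegDef !![a, b; b, c] := by
  intro v hv
  have hform : v ⬝ᵥ !![a, b; b, c] *ᵥ v = a * v 0 ^ 2 + 2 * b * v 0 * v 1 + c * v 1 ^ 2 := by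
    simp only [dotProduct, mulVec, Fin.sum_univ_two, of_apply, cons_val', cons_val_zero,
      cons_val_one, empty_val', cons_val_fin_one]
    ring
  rw [hform]
  rcases eq_or_ne (v 1) 0 with hv1 | hv1
  · have hv0 : v 0 ≠ 0 := fun hv0 => hv (by ext i; fin_cases i <;> assumption)
    rw [hv1]
    nlinarith [pow_two_pos_of_ne_zero hv0]
  · -- `a` times the form is `(a x + b y)² + (a c - b²) y² > 0`.
    nlinarith [sq_nonneg (a * v 0 + b * v 1), mul_pos hdet (pow_two_pos_of_ne_zero hv1)]

def sectorMargin (q s r k : ℝ) : ℝ := 2 * s * k - q * k ^ 2 - r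

lemma sectorMargin_pos {q s r k : ℝ} (hq : 0 < q)
    (hlo : (s - √(s ^ 2 - q * r)) / q < k) (hhi : k < (s + √(s ^ 2 - q * r)) / q) :
    0 < sectorMargin q s r k := by
  rw [div_lt_iff₀ hq] at hlo
  rw [lt_div_iff₀ hq] at hhi
  have hdisc : 0 < s ^ 2 - q * r := Real.sqrt_pos.1 (by linarith)
  have hsq : √(s ^ 2 - q * r) ^ 2 = s ^ 2 - q * r := Real.sq_sqrt hdisc.le
  have hroot : (q * k - s) ^ 2 < s ^ 2 - q * r := by nlinarith
  have hq_mul : q * sectorMargin q s r k = s ^ 2 - q * r - (q * k - s) ^ 2 := by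
    unfold sectorMargin; ring
  nlinarith

lemma sub_smul_sectorMat (q s r k1 k2 lam : ℝ) :
    !![q, s; s, r] - lam • sectorMat k1 k2 =
      !![q - lam, s - lam * ((k1 + k2) / 2); s - lam * ((k1 + k2) / 2), r - lam * (k1 * k2)] := by
  ext i j
  fin_cases i <;> fin_cases j <;> simp [sectorMat]

lemma det_sub_smul_sectorMat_witness {q s r k1 k2 : ℝ} (hk : k1 ≠ k2) :
    let lam := q + (sectorMargin q s r k1 + sectorMargin q s r k2) / (k2 - k1) ^ 2
    (q - lam) * (r - lam * (k1 * k2)) - (s - lam * ((k1 + k2) / 2)) ^ 2 =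
      sectorMargin q s r k1 * sectorMargin q s r k2 / (k2 - k1) ^ 2 := by
  have : k2 - k1 ≠ 0 := sub_ne_zero.2 hk.symm
  unfold sectorMargin
  field_simp
  ring

theorem stmt_1_general (q s r k1 k2 : ℝ) (hq : 0 < q)
    (h1 : (s - Real.sqrt (s ^ 2 - q * r)) / q < k1) (h12 : k1 < k2)
    (h2 : k2 < (s + Real.sqrt (s ^ 2 - q * r)) / q) :
    ∃ lam : ℝ, 0 < lam ∧ NegDef (!![q, s; s, r] - lam • sectorMat k1 k2) := by
  have hf1 : 0 < sectorMargin q s r k1 := sectorMargin_pos hq h1 (h12.trans h2)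
  have hf2 : 0 < sectorMargin q s r k2 := sectorMargin_pos hq (h1.trans h12) h2
  have he : 0 < (k2 - k1) ^ 2 := pow_pos (sub_pos.2 h12) 2
  have hstep : 0 < (sectorMargin q s r k1 + sectorMargin q s r k2) / (k2 - k1) ^ 2 := by
    positivity
  refine ⟨q + (sectorMargin q s r k1 + sectorMargin q s r k2) / (k2 - k1) ^ 2, by positivity, ?_⟩
  rw [sub_smul_sectorMat]
  refine negDef_of_neg_of_det_pos (by linarith) ?_
  rw [det_sub_smul_sectorMat_witness h12.ne]
  positivity

theorem stmt_1 (q s r k1 k2 : ℝ) (hq : 0 < q) (hd : 0 < s ^ 2 - q * r)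
    (h1 : (s - Real.sqrt (s ^ 2 - q * r)) / q < k1) (h12 : k1 < k2)
    (h2 : k2 < (s + Real.sqrt (s ^ 2 - q * r)) / q) :
    ∃ lam : ℝ, 0 < lam ∧ NegDef (!![q, s; s, r] - lam • sectorMat k1 k2) :=
  stmt_1_general q s r k1 k2 hq h1 h12 h2
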